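/- If U is an ultrafilter over κ which is ν-indecomposable for every cardinal ν with μ < ν ≤ 2^λ, then for any family S ⊆ U with |S| ≤ λ there is a set X with |X| ≤ μ such that X ∩ A ≠ ∅ for every A ∈ S. -/
import Mathlib


universe u

theorem stmt18 {A : Type u} (U : Ultrafilter A) (l m : Cardinal.{u})
    (hU : ∀ ν : Cardinal.{u}, m < ν → ν ≤ 2 ^ l →
      ∀ (ι : Type u) (f : ι → Set A), Cardinal.mk ι = ν → (⋃ i, f i) ∈ U →
        ∃ J : Set ι, Cardinal.mk ↥J < ν ∧ (⋃ i ∈ J, f i) ∈ U)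
    (S : Set (Set A)) (hS : ∀ s ∈ S, s ∈ U) (hcard : Cardinal.mk ↥S ≤ l) :
    ∃ X : Set A, Cardinal.mk ↥X ≤ m ∧ ∀ s ∈ S, (X ∩ s).Nonempty := by
  classical
  haveI : Nonempty A := Filter.nonempty_of_neBot (U : Filter A)
  set g : A → Set ↥S := fun a => {s | a ∈ (s : Set A)} with hg
  set fib : Set ↥S → Set A := fun T => g ⁻¹' {T} with hfib
  have hPne : ∃ ν, ∃ J : Set (Set ↥S),
      Cardinal.mk ↥J = ν ∧ (⋃ T ∈ J, fib T) ∈ U := by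
    refine ⟨Cardinal.mk (Set ↥S), Set.univ, by simp, ?_⟩
    have huniv : (⋃ T ∈ (Set.univ : Set (Set ↥S)), fib T) = Set.univ := by
      ext a
      simp only [Set.mem_iUnion, Set.mem_univ, iff_true]
      exact ⟨g a, trivial, rfl⟩
    rw [huniv]; exact Filter.univ_mem
  obtain ⟨ν, hν, hmin⟩ := Cardinal.lt_wf.has_min _ hPne
  obtain ⟨J, hJcard, hJU⟩ := hν
  have hνm : ν ≤ m := by
    by_contra h
    push_neg at h
    have hν2l : ν ≤ 2 ^ l := by
      calc ν = Cardinal.mk ↥J := hJcard.symm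
        _ ≤ Cardinal.mk (Set ↥S) := Cardinal.mk_le_of_injective Subtype.val_injective
        _ = 2 ^ Cardinal.mk ↥S := Cardinal.mk_set
        _ ≤ 2 ^ l := Cardinal.power_le_power_left (by norm_num) hcard
    obtain ⟨J', hJ'lt, hJ'U⟩ := hU ν h hν2l ↥J (fun T => fib T.1) hJcard
      (by rwa [Set.iUnion_coe_set])
    refine hmin (Cardinal.mk ↥(Subtype.val '' J')) ⟨Subtype.val '' J', rfl, ?_⟩ ?_
    · rwa [Set.biUnion_image]
    · rwa [Cardinal.mk_image_eq Subtype.val_injective]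
  -- choose a point in each nonempty fiber indexed by J
  set pick : ↥J → A := fun T =>
    if h : (fib T.1).Nonempty then h.some else Classical.arbitrary A with hpick
  refine ⟨Set.range pick, ?_, ?_⟩
  · calc Cardinal.mk ↥(Set.range pick) ≤ Cardinal.mk ↥J := Cardinal.mk_range_le
      _ = ν := hJcard
      _ ≤ m := hνm
  · intro s hs
    obtain ⟨a, haY, has⟩ := Filter.nonempty_of_mem (U.inter_mem hJU (hS s hs))
    simp only [Set.mem_iUnion] at haY
    obtain ⟨T, hTJ, haT⟩ := haY
    have hTa : g a = T := haT
    have hne : (fib T).Nonempty := ⟨a, haT⟩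
    refine ⟨pick ⟨T, hTJ⟩, ⟨⟨T, hTJ⟩, rfl⟩, ?_⟩
    have hx : pick ⟨T, hTJ⟩ ∈ fib T := by
      rw [hpick]
      simp only [dif_pos hne]
      exact hne.some_mem
    have hgx : g (pick ⟨T, hTJ⟩) = T := hx
    have : (⟨s, hs⟩ : ↥S) ∈ g a := has
    rw [hTa, ← hgx] at this
    exact this
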